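/- arXiv:2305.03656 — 5 statements merged into one kernel-verified Lean document; each statement's English description precedes it below -/
import Mathlib

section
/- Let (M,d) be a metric space, X, Y ⊆ M, υ_Y ∈ (0,∞). Let ν be a measure on a σ-algebra of subsets of Y containing the Borel subsets of Y, with ν(B(x,r) ∩ Y) < ∞ for all x ∈ X and r > 0, and ν(Y) < ∞. Let Y be upper υ_Y-Ahlfors regular with respect to X, with parameters r₀ ∈ (0,∞] and c > 0 witnessing the regularity. Then for every s ∈ (0, υ_Y) and every a ∈ (0, r₀): sup_{x∈X} ∫_Y d(x,y)^{−s} dν(y) ≤ ν(Y)·a^{−s} + c·(υ_Y/(υ_Y − s))·a^{υ_Y − s}. -/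
open MeasureTheory Metric Set
open scoped ENNReal

noncomputable section

variable {M : Type*} [MetricSpace M] [MeasurableSpace M] [BorelSpace M]

/-- `Y` is upper `υ`-Ahlfors regular with respect to `X`:
there exist `r₀ ∈ (0,∞]` and `c > 0` with `ν (B(x,r) ∩ Y) ≤ c rᵘ` for `x ∈ X`, `0 < r < r₀`. -/
def UpperAhlforsRegular (ν : Measure M) (X Y : Set M) (υ : ℝ) : Prop :=
  ∃ c : ℝ, 0 < c ∧ ∃ r₀ : ℝ≥0∞, 0 < r₀ ∧
    ∀ x ∈ X, ∀ r : ℝ, 0 < r → ENNReal.ofReal r < r₀ →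
      ν (ball x r ∩ Y) ≤ ENNReal.ofReal (c * r ^ υ)

/-- `Y` is strongly upper `υ`-Ahlfors regular with respect to `X`. -/
def StronglyUpperAhlforsRegular (ν : Measure M) (X Y : Set M) (υ : ℝ) : Prop :=
  ∃ c : ℝ, 0 < c ∧ ∃ r₀ : ℝ≥0∞, 0 < r₀ ∧
    ∀ x ∈ X, ∀ r₁ r₂ : ℝ, 0 ≤ r₁ → r₁ < r₂ → ENNReal.ofReal r₂ < r₀ →
      ν ((ball x r₂ \ ball x r₁) ∩ Y) ≤ ENNReal.ofReal (c * (r₂ ^ υ - r₁ ^ υ))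

/-- the set of values `d(x,y)^{s₁} |K(x,y)|`, `x ∈ X`, `y ∈ Y`, `x ≠ y`. -/
def kernelSet₁ (X Y : Set M) (s₁ : ℝ) (K : M → M → ℂ) : Set ℝ :=
  {t | ∃ x ∈ X, ∃ y ∈ Y, x ≠ y ∧ t = dist x y ^ s₁ * ‖K x y‖}

/-- the set of values `(d(x',y)^{s₂}/d(x',x'')^{s₃}) |K(x',y) - K(x'',y)|`,
`x', x'' ∈ X`, `x' ≠ x''`, `y ∈ Y \ B(x', 2 d(x',x''))`. -/
def kernelSet₂ (X Y : Set M) (s₂ s₃ : ℝ) (K : M → M → ℂ) : Set ℝ :=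
  {t | ∃ x' ∈ X, ∃ x'' ∈ X, x' ≠ x'' ∧ ∃ y ∈ Y \ ball x' (2 * dist x' x''),
        t = dist x' y ^ s₂ / dist x' x'' ^ s₃ * ‖K x' y - K x'' y‖}

/-- membership in the kernel class `𝒦_{s₁,s₂,s₃}(X×Y)`: continuity off the diagonal
together with finiteness of the two suprema defining the norm. -/
def MemK (X Y : Set M) (s₁ s₂ s₃ : ℝ) (K : M → M → ℂ) : Prop :=
  ContinuousOn (fun p : M × M => K p.1 p.2) ((X ×ˢ Y) \ {p : M × M | p.1 = p.2}) ∧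
  BddAbove (kernelSet₁ X Y s₁ K) ∧ BddAbove (kernelSet₂ X Y s₂ s₃ K)

/-- the norm `‖K‖` of the class `𝒦_{s₁,s₂,s₃}(X×Y)`. -/
def kNorm (X Y : Set M) (s₁ s₂ s₃ : ℝ) (K : M → M → ℂ) : ℝ :=
  sSup (kernelSet₁ X Y s₁ K) + sSup (kernelSet₂ X Y s₂ s₃ K)

/-- the set of values `|∫_{Y \ B(x,r)} K(x,y) dν(y)|`, `x ∈ X`, `r > 0`
(the maximal function values). -/
def maxFunSet (ν : Measure M) (X Y : Set M) (K : M → M → ℂ) : Set ℝ :=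
  {t | ∃ x ∈ X, ∃ r : ℝ, 0 < r ∧ t = ‖∫ y in Y \ ball x r, K x y ∂ν‖}

/-- membership in the kernel class `𝒦♯_{s₁,s₂,s₃}(X×Y)`. -/
def MemKSharp (ν : Measure M) (X Y : Set M) (s₁ s₂ s₃ : ℝ) (K : M → M → ℂ) : Prop :=
  MemK X Y s₁ s₂ s₃ K ∧
  (∀ x ∈ X, ∀ r : ℝ, 0 < r → IntegrableOn (K x) (Y \ ball x r) ν) ∧
  BddAbove (maxFunSet ν X Y K)

/-- the norm of the class `𝒦♯_{s₁,s₂,s₃}(X×Y)`. -/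
def kNormSharp (ν : Measure M) (X Y : Set M) (s₁ s₂ s₃ : ℝ) (K : M → M → ℂ) : ℝ :=
  kNorm X Y s₁ s₂ s₃ K + sSup (maxFunSet ν X Y K)

/-- the set of Hölder quotients `|g x - g y| / d(x,y)^β`, `x, y ∈ D`, `x ≠ y`. -/
def holderSet (D : Set M) (β : ℝ) (g : M → ℂ) : Set ℝ :=
  {t | ∃ x ∈ D, ∃ y ∈ D, x ≠ y ∧ t = ‖g x - g y‖ / dist x y ^ β}

/-- `g` is `β`-Hölder continuous on `D`. -/
def IsHolderOn (D : Set M) (β : ℝ) (g : M → ℂ) : Prop :=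
  BddAbove (holderSet D β g)

/-- the `β`-Hölder seminorm `|g|_β` of `g` on `D`. -/
def holderSemi (D : Set M) (β : ℝ) (g : M → ℂ) : ℝ :=
  sSup (holderSet D β g)

def supValSet (D : Set M) (f : M → ℂ) : Set ℝ := {t | ∃ x ∈ D, t = ‖f x‖}

/-- `f` is bounded on `D`. -/
def BoundedOnSet (D : Set M) (f : M → ℂ) : Prop := BddAbove (supValSet D f)

/-- the sup-norm of `f` on `D`. -/
def supNormOn (D : Set M) (f : M → ℂ) : ℝ := sSup (supValSet D f)

/-- `Q[Z,g,1](x) = ∫_Y Z(x,y) (g(x) - g(y)) dν(y)`. -/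
def Qop (ν : Measure M) (Y : Set M) (Z : M → M → ℂ) (g : M → ℂ) (x : M) : ℂ :=
  ∫ y in Y, Z x y * (g x - g y) ∂ν

/-- the modulus of continuity `ω_θ`. -/
def omegaMod (θ r : ℝ) : ℝ :=
  if r ≤ 0 then 0
  else if r ≤ Real.exp (-1 / θ) then r ^ θ * |Real.log r|
  else Real.exp (-1 / θ) ^ θ * |Real.log (Real.exp (-1 / θ))|


theorem stmt_11 {M : Type*} [MetricSpace M] [MeasurableSpace M] [BorelSpace M]
    (X Y : Set M) (ν : Measure M) (hYm : MeasurableSet Y)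
    (υ : ℝ) (hυ : 0 < υ)
    (hball : ∀ x ∈ X, ∀ r : ℝ, 0 < r → ν (ball x r ∩ Y) < ⊤)
    (hYfin : ν Y < ⊤)
    (r₀ : ℝ≥0∞) (hr₀ : 0 < r₀) (c : ℝ) (hc : 0 < c)
    (hreg : ∀ x ∈ X, ∀ r : ℝ, 0 < r → ENNReal.ofReal r < r₀ →
      ν (ball x r ∩ Y) ≤ ENNReal.ofReal (c * r ^ υ)) :
    ∀ s : ℝ, 0 < s → s < υ → ∀ a : ℝ, 0 < a → ENNReal.ofReal a < r₀ →
      ∀ x ∈ X,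
        (∫⁻ y in Y, ENNReal.ofReal (dist x y ^ (-s)) ∂ν) ≤
          ν Y * ENNReal.ofReal (a ^ (-s)) +
            ENNReal.ofReal (c * (υ / (υ - s)) * a ^ (υ - s)) := by
  intro s hs hsυ a ha har x hx
  have hυs : 0 < υ - s := by linarith
  set f : M → ℝ := fun y => dist x y ^ (-s) with hf
  have hfm : Measurable f :=
    (continuous_const.dist continuous_id).measurable.pow measurable_const
  have hfnn : ∀ y, 0 ≤ f y := fun y => Real.rpow_nonneg dist_nonneg _
  -- split into near and far parts
  have hsplit :
      (∫⁻ y in Y ∩ ball x a, ENNReal.ofReal (f y) ∂ν) +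
        (∫⁻ y in Y \ ball x a, ENNReal.ofReal (f y) ∂ν) =
      ∫⁻ y in Y, ENNReal.ofReal (f y) ∂ν :=
    lintegral_inter_add_diff _ Y measurableSet_ball
  -- far part
  have hfar : (∫⁻ y in Y \ ball x a, ENNReal.ofReal (f y) ∂ν) ≤
      ν Y * ENNReal.ofReal (a ^ (-s)) := by
    have hb1 : ∀ y ∈ Y \ ball x a, ENNReal.ofReal (f y) ≤ ENNReal.ofReal (a ^ (-s)) := by
      intro y hy
      have hd : a ≤ dist x y := by
        have := hy.2
        simpa [ball, dist_comm] using this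
      exact ENNReal.ofReal_le_ofReal
        (Real.rpow_le_rpow_of_nonpos ha hd (by linarith))
    calc (∫⁻ y in Y \ ball x a, ENNReal.ofReal (f y) ∂ν)
        ≤ ∫⁻ _ in Y \ ball x a, ENNReal.ofReal (a ^ (-s)) ∂ν :=
          setLIntegral_mono measurable_const hb1
      _ = ν (Y \ ball x a) * ENNReal.ofReal (a ^ (-s)) := by
          rw [setLIntegral_const, mul_comm]
      _ ≤ ν Y * ENNReal.ofReal (a ^ (-s)) :=
          mul_le_mul_left (measure_mono diff_subset) _
  -- near part
  set μ := ν.restrict (Y ∩ ball x a) with hμ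
  have hYB : MeasurableSet (Y ∩ ball x a) := hYm.inter measurableSet_ball
  have hlayer : (∫⁻ y in Y ∩ ball x a, ENNReal.ofReal (f y) ∂ν) =
      ∫⁻ t in Ioi (0:ℝ), μ {y | t < f y} :=
    lintegral_eq_lintegral_meas_lt μ (Filter.Eventually.of_forall hfnn) hfm.aemeasurable
  set b : ℝ := a ^ (-s) with hbdef
  have hb : 0 < b := Real.rpow_pos_of_pos ha _
  have hIoi : Ioc (0:ℝ) b ∪ Ioi b = Ioi 0 := Ioc_union_Ioi_eq_Ioi hb.le
  have hdisj : Disjoint (Ioc (0:ℝ) b) (Ioi b) := by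
    rw [Set.disjoint_left]
    rintro t ⟨_, h2⟩ h3
    exact absurd h3 (not_lt.2 h2)
  have hsplit2 : (∫⁻ t in Ioi (0:ℝ), μ {y | t < f y}) =
      (∫⁻ t in Ioc (0:ℝ) b, μ {y | t < f y}) + ∫⁻ t in Ioi b, μ {y | t < f y} := by
    rw [← hIoi, lintegral_union measurableSet_Ioi hdisj]
  -- first piece
  have hpiece1 : (∫⁻ t in Ioc (0:ℝ) b, μ {y | t < f y}) ≤
      ENNReal.ofReal (c * a ^ (υ - s)) := by
    have hbound : ∀ t ∈ Ioc (0:ℝ) b, μ {y | t < f y} ≤ ENNReal.ofReal (c * a ^ υ) := by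
      intro t _
      calc μ {y | t < f y} ≤ μ univ := measure_mono (subset_univ _)
        _ = ν (Y ∩ ball x a) := by rw [hμ, Measure.restrict_apply_univ]
        _ ≤ ENNReal.ofReal (c * a ^ υ) := by
            rw [inter_comm]; exact hreg x hx a ha har
    calc (∫⁻ t in Ioc (0:ℝ) b, μ {y | t < f y})
        ≤ ∫⁻ _ in Ioc (0:ℝ) b, ENNReal.ofReal (c * a ^ υ) :=
          setLIntegral_mono measurable_const hbound
      _ = ENNReal.ofReal (c * a ^ υ) * ENNReal.ofReal b := by
          rw [setLIntegral_const, Real.volume_Ioc, sub_zero, mul_comm]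
      _ = ENNReal.ofReal (c * a ^ (υ - s)) := by
          rw [← ENNReal.ofReal_mul (by positivity)]
          congr 1
          rw [hbdef, mul_assoc, ← Real.rpow_add ha, ← sub_eq_add_neg]
  -- second piece
  have hpiece2 : (∫⁻ t in Ioi b, μ {y | t < f y}) ≤
      ENNReal.ofReal (c * (s / (υ - s)) * a ^ (υ - s)) := by
    have hbound : ∀ t ∈ Ioi b, μ {y | t < f y} ≤ ENNReal.ofReal (c * (t ^ (-(υ/s)))) := by
      intro t ht
      have ht0 : 0 < t := lt_trans hb ht
      set r : ℝ := t ^ (-(1/s)) with hrdef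
      have hr0 : 0 < r := Real.rpow_pos_of_pos ht0 _
      have hra : r < a := by
        have h2 : t ^ (-(1/s)) < b ^ (-(1/s)) :=
          Real.rpow_lt_rpow_of_neg hb ht (neg_lt_zero.mpr (by positivity))
        have hbr : b ^ (-(1/s)) = a := by
          rw [hbdef, ← Real.rpow_mul ha.le]
          have he : (-s) * -(1/s) = 1 := by field_simp
          rw [he, Real.rpow_one]
        rw [hbr] at h2
        exact h2
      have hrr₀ : ENNReal.ofReal r < r₀ :=
        lt_of_le_of_lt (ENNReal.ofReal_le_ofReal hra.le) har
      have hsub : {y | t < f y} ⊆ ball x r := by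
        intro y hy
        have hty : t < dist x y ^ (-s) := hy
        have hd0 : 0 < dist x y := by
          rcases eq_or_lt_of_le (dist_nonneg : (0:ℝ) ≤ dist x y) with h | h
          · exfalso
            rw [← h, Real.zero_rpow (by linarith : -s ≠ 0)] at hty
            linarith
          · exact h
        have h2 : (dist x y ^ (-s)) ^ (-(1/s)) < t ^ (-(1/s)) :=
          Real.rpow_lt_rpow_of_neg ht0 hty (neg_lt_zero.mpr (by positivity))
        have hdy : (dist x y ^ (-s)) ^ (-(1/s)) = dist x y := by
          rw [← Real.rpow_mul dist_nonneg]
          have he : (-s) * -(1/s) = 1 := by field_simp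
          rw [he, Real.rpow_one]
        rw [hdy] at h2
        rw [mem_ball, dist_comm]
        exact h2
      have hμle : μ {y | t < f y} ≤ ν (ball x r ∩ Y) := by
        rw [hμ, Measure.restrict_apply' hYB]
        exact measure_mono (fun y hy => ⟨hsub hy.1, hy.2.1⟩)
      have hrυ : c * r ^ υ = c * t ^ (-(υ/s)) := by
        rw [hrdef, ← Real.rpow_mul ht0.le]
        congr 2
        ring
      calc μ {y | t < f y} ≤ ν (ball x r ∩ Y) := hμle
        _ ≤ ENNReal.ofReal (c * r ^ υ) := hreg x hx r hr0 hrr₀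
        _ = ENNReal.ofReal (c * t ^ (-(υ/s))) := by rw [hrυ]
    have hexp : -(υ/s) < -1 := by
      rw [neg_lt_neg_iff]
      rw [lt_div_iff₀ hs]
      linarith
    have hint : IntegrableOn (fun t : ℝ => c * t ^ (-(υ/s))) (Ioi b) :=
      (integrableOn_Ioi_rpow_of_lt hexp hb).const_mul c
    calc (∫⁻ t in Ioi b, μ {y | t < f y})
        ≤ ∫⁻ t in Ioi b, ENNReal.ofReal (c * t ^ (-(υ/s))) :=
          setLIntegral_mono ((measurable_const.mul (measurable_id.pow measurable_const)).ennreal_ofReal) hbound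
      _ = ENNReal.ofReal (∫ t in Ioi b, c * t ^ (-(υ/s))) := by
          rw [ofReal_integral_eq_lintegral_ofReal hint]
          exact Filter.eventually_of_mem (self_mem_ae_restrict measurableSet_Ioi)
            (fun t ht => mul_nonneg hc.le
              (Real.rpow_nonneg (le_of_lt (lt_trans hb ht)) _))
      _ ≤ ENNReal.ofReal (c * (s / (υ - s)) * a ^ (υ - s)) := by
          apply ENNReal.ofReal_le_ofReal
          rw [MeasureTheory.integral_const_mul, integral_Ioi_rpow_of_lt hexp hb]
          have hsne : s ≠ 0 := ne_of_gt hs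
          have hne2 : υ - s ≠ 0 := ne_of_gt hυs
          have hbpow : b ^ ((-(υ/s)) + 1) = a ^ (υ - s) := by
            rw [hbdef, ← Real.rpow_mul ha.le]
            congr 1
            field_simp
            ring
          rw [hbpow]
          apply le_of_eq
          have hne3 : -υ + s ≠ 0 := by intro h; exact hne2 (by linarith)
          have hne4 : s - υ ≠ 0 := by intro h; exact hne2 (by linarith)
          field_simp
          ring
  -- combine
  rw [← hsplit, hlayer, hsplit2]
  have hnear : (∫⁻ t in Ioc (0:ℝ) b, μ {y | t < f y}) + (∫⁻ t in Ioi b, μ {y | t < f y}) ≤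
      ENNReal.ofReal (c * (υ / (υ - s)) * a ^ (υ - s)) := by
    calc _ ≤ ENNReal.ofReal (c * a ^ (υ - s)) +
        ENNReal.ofReal (c * (s / (υ - s)) * a ^ (υ - s)) := add_le_add hpiece1 hpiece2
      _ = ENNReal.ofReal (c * (υ / (υ - s)) * a ^ (υ - s)) := by
          rw [← ENNReal.ofReal_add (by positivity) (by positivity)]
          congr 1
          field_simp
          ring
  calc (∫⁻ t in Ioc (0:ℝ) b, μ {y | t < f y}) + (∫⁻ t in Ioi b, μ {y | t < f y}) +
        (∫⁻ y in Y \ ball x a, ENNReal.ofReal (f y) ∂ν)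
      ≤ ENNReal.ofReal (c * (υ / (υ - s)) * a ^ (υ - s)) + ν Y * ENNReal.ofReal (a ^ (-s)) :=
        add_le_add hnear hfar
    _ = _ := add_comm _ _
end
end

section
/- Let (M,d) be a metric space, X, Y ⊆ M, υ_Y ∈ (0,∞). Let ν be a measure on a σ-algebra of subsets of Y containing the Borel subsets of Y, with ν(B(x,r) ∩ Y) < ∞ for all x ∈ X and r > 0. Let Y be upper υ_Y-Ahlfors regular with respect to X with parameters r₀ ∈ (0,∞] and c > 0, and assume ν(Y) < ∞ whenever r₀ < ∞. Then for every s ∈ (−∞, υ_Y): sup over (x,t) ∈ X × (0,∞) of t^{s−υ_Y} ∫_{B(x,t)∩Y} d(x,y)^{−s} dν(y) is finite. -/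
open MeasureTheory Metric Set
open scoped ENNReal

noncomputable section

variable {M : Type*} [MetricSpace M] [MeasurableSpace M] [BorelSpace M]

/-- Key dyadic decomposition bound for small radii, `s ≠ 0`. -/
lemma small_bound {M : Type*} [MetricSpace M] [MeasurableSpace M] [BorelSpace M]
    (Y : Set M) (ν : Measure M) (υ s c : ℝ) (hc : 0 < c) (hs : s ≠ 0) (hsυ : s < υ)
    (x : M) (r : ℝ) (hr : 0 < r)
    (hreg' : ∀ r' : ℝ, 0 < r' → r' ≤ r → ν (ball x r' ∩ Y) ≤ ENNReal.ofReal (c * r' ^ υ)) :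
    ∫⁻ y in ball x r ∩ Y, ENNReal.ofReal (dist x y ^ (-s)) ∂ν ≤
      ENNReal.ofReal (c * 2 ^ |s| * 2 ^ s * r ^ (υ - s)) *
        (1 - ENNReal.ofReal ((1/2 : ℝ) ^ (υ - s)))⁻¹ := by
  set u : ℕ → ℝ := fun j => r * (1/2) ^ j with hu
  have hupos : ∀ j, 0 < u j := fun j => by positivity
  have hule : ∀ j, u j ≤ r := by
    intro j
    have : ((1:ℝ)/2) ^ j ≤ 1 := pow_le_one₀ (by norm_num) (by norm_num)
    calc u j = r * (1/2)^j := rfl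
      _ ≤ r * 1 := by nlinarith
      _ = r := mul_one r
  have hudouble : ∀ j, u j = 2 * u (j + 1) := by
    intro j; simp only [hu, pow_succ]; ring
  have hsub : ball x r ∩ Y ⊆
      ({x} : Set M) ∪ ⋃ j, ((ball x (u j) \ ball x (u (j + 1))) ∩ Y) := by
    rintro y ⟨hyb, hyY⟩
    rcases eq_or_ne y x with rfl | hyx
    · exact Or.inl rfl
    · right
      have hd : 0 < dist y x := dist_pos.2 hyx
      have hex : ∃ n : ℕ, u n ≤ dist y x := by
        obtain ⟨n, hn⟩ := exists_pow_lt_of_lt_one (div_pos hd hr) (show (1:ℝ)/2 < 1 by norm_num)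
        exact ⟨n, by rw [hu]; nlinarith [(lt_div_iff₀ hr).1 hn]⟩
      classical
      set n0 := Nat.find hex with hn0
      have h1 : u n0 ≤ dist y x := Nat.find_spec hex
      have hn0pos : n0 ≠ 0 := by
        intro h
        rw [h] at h1
        simp only [hu, pow_zero, mul_one] at h1
        exact absurd (mem_ball.1 hyb) (not_lt.2 h1)
      obtain ⟨j, hj⟩ : ∃ j, n0 = j + 1 := ⟨n0 - 1, (Nat.succ_pred_eq_of_pos (Nat.pos_of_ne_zero hn0pos)).symm⟩
      have h2 : ¬ u j ≤ dist y x := Nat.find_min hex (by omega)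
      refine mem_iUnion.2 ⟨j, ⟨⟨mem_ball.2 (not_le.1 h2), ?_⟩, hyY⟩⟩
      simp only [mem_ball, not_lt]
      rw [← hj]; exact h1
  have fx0 : ENNReal.ofReal (dist x x ^ (-s)) = 0 := by
    rw [dist_self, Real.zero_rpow (neg_ne_zero.2 hs)]; simp
  set q : ℝ≥0∞ := ENNReal.ofReal ((1/2 : ℝ) ^ (υ - s)) with hq
  set A : ℝ := c * 2 ^ |s| * 2 ^ s with hA
  have hterm : ∀ j : ℕ,
      ∫⁻ y in (ball x (u j) \ ball x (u (j + 1))) ∩ Y, ENNReal.ofReal (dist x y ^ (-s)) ∂ν ≤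
        ENNReal.ofReal (A * r ^ (υ - s)) * q ^ j := by
    intro j
    have hptwise : ∀ y ∈ (ball x (u j) \ ball x (u (j + 1))) ∩ Y,
        ENNReal.ofReal (dist x y ^ (-s)) ≤
          ENNReal.ofReal (2 ^ |s| * u (j + 1) ^ (-s)) := by
      rintro y ⟨⟨hy1, hy2⟩, _⟩
      have hd1 : dist x y < u j := by rw [dist_comm]; exact mem_ball.1 hy1
      have hd2 : u (j + 1) ≤ dist x y := by rw [dist_comm]; exact not_lt.1 (by simpa [mem_ball] using hy2)
      apply ENNReal.ofReal_le_ofReal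
      rcases lt_or_ge 0 s with hspos | hsneg
      · have h1 : dist x y ^ (-s) ≤ u (j + 1) ^ (-s) :=
          Real.rpow_le_rpow_of_nonpos (hupos _) hd2 (by linarith)
        have h2 : (1:ℝ) ≤ 2 ^ |s| := Real.one_le_rpow (by norm_num) (abs_nonneg s)
        nlinarith [Real.rpow_nonneg (le_of_lt (hupos (j+1))) (-s)]
      · have h1 : dist x y ^ (-s) ≤ (u j) ^ (-s) :=
          Real.rpow_le_rpow dist_nonneg hd1.le (by linarith)
        have h2 : (u j) ^ (-s) = 2 ^ (-s) * u (j + 1) ^ (-s) := by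
          rw [hudouble j, Real.mul_rpow (by norm_num) (hupos (j+1)).le]
        rw [abs_of_nonpos hsneg]
        rw [h2] at h1; exact h1
    calc ∫⁻ y in (ball x (u j) \ ball x (u (j + 1))) ∩ Y, ENNReal.ofReal (dist x y ^ (-s)) ∂ν
        ≤ ∫⁻ _ in (ball x (u j) \ ball x (u (j + 1))) ∩ Y,
            ENNReal.ofReal (2 ^ |s| * u (j + 1) ^ (-s)) ∂ν :=
          setLIntegral_mono measurable_const hptwise
      _ = ENNReal.ofReal (2 ^ |s| * u (j + 1) ^ (-s)) *
            ν ((ball x (u j) \ ball x (u (j + 1))) ∩ Y) := setLIntegral_const _ _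
      _ ≤ ENNReal.ofReal (2 ^ |s| * u (j + 1) ^ (-s)) * ENNReal.ofReal (c * (u j) ^ υ) := by
          gcongr
          · exact le_trans (measure_mono (inter_subset_inter_left Y diff_subset))
              (hreg' (u j) (hupos j) (hule j))
      _ = ENNReal.ofReal (A * r ^ (υ - s)) * q ^ j := by
          rw [← ENNReal.ofReal_mul (by positivity), hq, ← ENNReal.ofReal_pow (by positivity),
            ← ENNReal.ofReal_mul (by positivity)]
          congr 1
          have e1 : ∀ (k : ℕ) (t : ℝ), (u k) ^ t = r ^ t * ((1/2 : ℝ) ^ t) ^ k := by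
            intro k t
            rw [hu]
            rw [Real.mul_rpow hr.le (by positivity), ← Real.rpow_natCast ((1:ℝ)/2) k,
              ← Real.rpow_natCast (((1:ℝ)/2) ^ t) k, ← Real.rpow_mul (by norm_num),
              ← Real.rpow_mul (by norm_num), mul_comm t (k:ℝ)]
          rw [e1 (j+1) (-s), e1 j υ, hA]
          have e2 : ((1/2 : ℝ) ^ (-s)) = 2 ^ s := by
            rw [show (1/2 : ℝ) = 2⁻¹ by norm_num, ← Real.rpow_neg_one (2:ℝ),
              ← Real.rpow_mul (by norm_num)]
            norm_num
          have e3 : r ^ (-s) * r ^ υ = r ^ (υ - s) := by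
            rw [← Real.rpow_add hr]; ring_nf
          have e4 : ((1/2 : ℝ) ^ (-s)) * ((1/2 : ℝ) ^ υ) = (1/2 : ℝ) ^ (υ - s) := by
            rw [← Real.rpow_add (by norm_num)]; ring_nf
          rw [pow_succ ((1/2 : ℝ) ^ (-s)) j]
          calc 2 ^ |s| * (r ^ (-s) * (((1/2:ℝ) ^ (-s)) ^ j * (1/2:ℝ) ^ (-s))) *
                (c * (r ^ υ * ((1/2:ℝ) ^ υ) ^ j))
              = (c * 2 ^ |s| * ((1/2:ℝ) ^ (-s)) * (r ^ (-s) * r ^ υ)) *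
                  (((1/2:ℝ) ^ (-s)) * ((1/2:ℝ) ^ υ)) ^ j := by ring
            _ = c * 2 ^ |s| * 2 ^ s * r ^ (υ - s) * ((1/2:ℝ) ^ (υ - s)) ^ j := by
                rw [e4, e3, e2]
  calc ∫⁻ y in ball x r ∩ Y, ENNReal.ofReal (dist x y ^ (-s)) ∂ν
      ≤ ∫⁻ y in ({x} : Set M) ∪ ⋃ j, ((ball x (u j) \ ball x (u (j + 1))) ∩ Y),
          ENNReal.ofReal (dist x y ^ (-s)) ∂ν := lintegral_mono_set hsub
    _ ≤ (∫⁻ y in ({x} : Set M), ENNReal.ofReal (dist x y ^ (-s)) ∂ν) +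
          ∫⁻ y in ⋃ j, ((ball x (u j) \ ball x (u (j + 1))) ∩ Y),
            ENNReal.ofReal (dist x y ^ (-s)) ∂ν := lintegral_union_le _ _ _
    _ ≤ 0 + ∑' j, ∫⁻ y in (ball x (u j) \ ball x (u (j + 1))) ∩ Y,
          ENNReal.ofReal (dist x y ^ (-s)) ∂ν := by
        gcongr
        · rw [lintegral_singleton, fx0, zero_mul]
        · exact lintegral_iUnion_le _ _
    _ ≤ ∑' j : ℕ, ENNReal.ofReal (A * r ^ (υ - s)) * q ^ j := by
        rw [zero_add]; exact ENNReal.tsum_le_tsum hterm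
    _ = ENNReal.ofReal (A * r ^ (υ - s)) * (1 - q)⁻¹ := by
        rw [ENNReal.tsum_mul_left, ENNReal.tsum_geometric]

theorem stmt_12 {M : Type*} [MetricSpace M] [MeasurableSpace M] [BorelSpace M]
    (X Y : Set M) (ν : Measure M) (hYm : MeasurableSet Y)
    (υ : ℝ) (hυ : 0 < υ)
    (hball : ∀ x ∈ X, ∀ r : ℝ, 0 < r → ν (ball x r ∩ Y) < ⊤)
    (r₀ : ℝ≥0∞) (hr₀ : 0 < r₀) (c : ℝ) (hc : 0 < c)
    (hreg : ∀ x ∈ X, ∀ r : ℝ, 0 < r → ENNReal.ofReal r < r₀ →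
      ν (ball x r ∩ Y) ≤ ENNReal.ofReal (c * r ^ υ))
    (hYfin : r₀ ≠ ⊤ → ν Y < ⊤) :
    ∀ s : ℝ, s < υ →
      sSup {t : ℝ≥0∞ | ∃ x ∈ X, ∃ r : ℝ, 0 < r ∧
        t = ENNReal.ofReal (r ^ (s - υ)) *
          ∫⁻ y in ball x r ∩ Y, ENNReal.ofReal (dist x y ^ (-s)) ∂ν} < ⊤ := by
  intro s hsυ
  set q : ℝ≥0∞ := ENNReal.ofReal ((1/2 : ℝ) ^ (υ - s)) with hq
  have hq1 : q < 1 := by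
    rw [hq, ← ENNReal.ofReal_one]
    exact (ENNReal.ofReal_lt_ofReal_iff one_pos).2
      (Real.rpow_lt_one (by norm_num) (by norm_num) (by linarith))
  have hqtop : (1 - q)⁻¹ ≠ ⊤ := ENNReal.inv_ne_top.2 (tsub_pos_of_lt hq1).ne'
  set C₁ : ℝ≥0∞ := ENNReal.ofReal (c * 2 ^ |s| * 2 ^ s) * (1 - q)⁻¹ with hC₁
  have hC₁top : C₁ ≠ ⊤ := ENNReal.mul_ne_top ENNReal.ofReal_ne_top hqtop
  set Cs : ℝ≥0∞ := max C₁ (ENNReal.ofReal c) with hCs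
  have hCstop : Cs < ⊤ := by
    rw [hCs, max_lt_iff]
    exact ⟨hC₁top.lt_top, ENNReal.ofReal_lt_top⟩
  -- the key claim for "small" radii
  have claim : ∀ x ∈ X, ∀ r : ℝ, 0 < r → ENNReal.ofReal r < r₀ →
      ENNReal.ofReal (r ^ (s - υ)) *
        (∫⁻ y in ball x r ∩ Y, ENNReal.ofReal (dist x y ^ (-s)) ∂ν) ≤ Cs := by
    intro x hx r hr hrlt
    rcases eq_or_ne s 0 with rfl | hs
    · have hint : (∫⁻ y in ball x r ∩ Y, ENNReal.ofReal (dist x y ^ (-(0:ℝ))) ∂ν)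
          = ν (ball x r ∩ Y) := by
        simp [Real.rpow_zero]
      rw [hint]
      calc ENNReal.ofReal (r ^ ((0:ℝ) - υ)) * ν (ball x r ∩ Y)
          ≤ ENNReal.ofReal (r ^ ((0:ℝ) - υ)) * ENNReal.ofReal (c * r ^ υ) := by
            gcongr; exact hreg x hx r hr hrlt
        _ = ENNReal.ofReal (r ^ ((0:ℝ) - υ) * (c * r ^ υ)) :=
            (ENNReal.ofReal_mul (Real.rpow_nonneg hr.le _)).symm
        _ = ENNReal.ofReal c := by
            congr 1
            have h0 : r ^ ((0:ℝ) - υ) * r ^ υ = 1 := by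
              rw [← Real.rpow_add hr]; norm_num
            rw [show r ^ ((0:ℝ) - υ) * (c * r ^ υ) = (r ^ ((0:ℝ) - υ) * r ^ υ) * c by ring,
              h0, one_mul]
        _ ≤ Cs := le_max_right _ _
    · have hb := small_bound Y ν υ s c hc hs hsυ x r hr
        (fun r' h1 h2 => hreg x hx r' h1
          (lt_of_le_of_lt (ENNReal.ofReal_le_ofReal h2) hrlt))
      calc ENNReal.ofReal (r ^ (s - υ)) *
            (∫⁻ y in ball x r ∩ Y, ENNReal.ofReal (dist x y ^ (-s)) ∂ν)
          ≤ ENNReal.ofReal (r ^ (s - υ)) *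
              (ENNReal.ofReal (c * 2 ^ |s| * 2 ^ s * r ^ (υ - s)) * (1 - q)⁻¹) := by
            gcongr
        _ = ENNReal.ofReal (r ^ (s - υ) * (c * 2 ^ |s| * 2 ^ s * r ^ (υ - s))) * (1 - q)⁻¹ := by
            rw [← mul_assoc, ← ENNReal.ofReal_mul (Real.rpow_nonneg hr.le _)]
        _ = C₁ := by
            rw [hC₁]
            congr 2
            have h0 : r ^ (s - υ) * r ^ (υ - s) = 1 := by
              rw [← Real.rpow_add hr]; norm_num
            rw [show r ^ (s - υ) * (c * 2 ^ |s| * 2 ^ s * r ^ (υ - s)) =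
              (r ^ (s - υ) * r ^ (υ - s)) * (c * 2 ^ |s| * 2 ^ s) by ring, h0, one_mul]
        _ ≤ Cs := le_max_left _ _
  rcases eq_or_ne r₀ ⊤ with rfl | htop
  · refine lt_of_le_of_lt (sSup_le ?_) hCstop
    rintro t ⟨x, hx, r, hr, rfl⟩
    exact claim x hx r hr (ENNReal.ofReal_lt_top)
  · set ρ : ℝ := r₀.toReal with hρdef
    have hρ : 0 < ρ := ENNReal.toReal_pos hr₀.ne' htop
    set CL : ℝ≥0∞ := ENNReal.ofReal (2 * (ρ/2) ^ (-υ)) * ν Y with hCL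
    have hCLtop : CL < ⊤ := ENNReal.mul_lt_top ENNReal.ofReal_lt_top (hYfin htop)
    refine lt_of_le_of_lt (sSup_le ?_) (ENNReal.add_lt_top.2 ⟨hCstop, hCLtop⟩)
    rintro t ⟨x, hx, r, hr, rfl⟩
    by_cases hsmall : ENNReal.ofReal r < r₀
    · exact le_trans (claim x hx r hr hsmall) le_self_add
    · have hρr : ρ ≤ r := ENNReal.toReal_le_of_le_ofReal hr.le (not_lt.1 hsmall)
      have hρ2 : 0 < ρ/2 := by linarith
      have hρ2r : ρ/2 ≤ r := by linarith
      have hρ2lt : ENNReal.ofReal (ρ/2) < r₀ := by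
        rw [show r₀ = ENNReal.ofReal ρ from (ENNReal.ofReal_toReal htop).symm]
        exact (ENNReal.ofReal_lt_ofReal_iff hρ).2 (by linarith)
      have hsplit : ball x r ∩ Y ⊆
          (ball x (ρ/2) ∩ Y) ∪ ((ball x r ∩ Y) \ ball x (ρ/2)) := by
        intro y hy
        by_cases h : y ∈ ball x (ρ/2)
        · exact Or.inl ⟨h, hy.2⟩
        · exact Or.inr ⟨hy, h⟩
      have hint : (∫⁻ y in ball x r ∩ Y, ENNReal.ofReal (dist x y ^ (-s)) ∂ν) ≤
          (∫⁻ y in ball x (ρ/2) ∩ Y, ENNReal.ofReal (dist x y ^ (-s)) ∂ν) +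
            ∫⁻ y in (ball x r ∩ Y) \ ball x (ρ/2), ENNReal.ofReal (dist x y ^ (-s)) ∂ν :=
        le_trans (lintegral_mono_set hsplit) (lintegral_union_le _ _ _)
      have hpt2 : ∀ y ∈ (ball x r ∩ Y) \ ball x (ρ/2),
          ENNReal.ofReal (dist x y ^ (-s)) ≤
            ENNReal.ofReal ((ρ/2) ^ (-s) + r ^ (-s)) := by
        rintro y ⟨⟨hy1, _⟩, hy2⟩
        have hd1 : dist x y < r := by rw [dist_comm]; exact mem_ball.1 hy1
        have hd2 : ρ/2 ≤ dist x y := by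
          rw [dist_comm]; exact not_lt.1 (by simpa [mem_ball] using hy2)
        apply ENNReal.ofReal_le_ofReal
        rcases le_or_gt s 0 with hsneg | hspos
        · have : dist x y ^ (-s) ≤ r ^ (-s) :=
            Real.rpow_le_rpow dist_nonneg hd1.le (by linarith)
          nlinarith [Real.rpow_nonneg hρ2.le (-s)]
        · have : dist x y ^ (-s) ≤ (ρ/2) ^ (-s) :=
            Real.rpow_le_rpow_of_nonpos hρ2 hd2 (by linarith)
          nlinarith [Real.rpow_nonneg hr.le (-s)]
      have hI2 : (∫⁻ y in (ball x r ∩ Y) \ ball x (ρ/2),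
            ENNReal.ofReal (dist x y ^ (-s)) ∂ν) ≤
          ENNReal.ofReal ((ρ/2) ^ (-s) + r ^ (-s)) * ν Y := by
        calc (∫⁻ y in (ball x r ∩ Y) \ ball x (ρ/2), ENNReal.ofReal (dist x y ^ (-s)) ∂ν)
            ≤ ∫⁻ _ in (ball x r ∩ Y) \ ball x (ρ/2),
                ENNReal.ofReal ((ρ/2) ^ (-s) + r ^ (-s)) ∂ν :=
              setLIntegral_mono measurable_const hpt2
          _ = ENNReal.ofReal ((ρ/2) ^ (-s) + r ^ (-s)) *
                ν ((ball x r ∩ Y) \ ball x (ρ/2)) := setLIntegral_const _ _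
          _ ≤ ENNReal.ofReal ((ρ/2) ^ (-s) + r ^ (-s)) * ν Y := by
              gcongr
              exact (diff_subset.trans inter_subset_right)
      calc ENNReal.ofReal (r ^ (s - υ)) *
            (∫⁻ y in ball x r ∩ Y, ENNReal.ofReal (dist x y ^ (-s)) ∂ν)
          ≤ ENNReal.ofReal (r ^ (s - υ)) *
              ((∫⁻ y in ball x (ρ/2) ∩ Y, ENNReal.ofReal (dist x y ^ (-s)) ∂ν) +
                ENNReal.ofReal ((ρ/2) ^ (-s) + r ^ (-s)) * ν Y) := by
            gcongr
            exact le_trans hint (by gcongr)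
        _ = ENNReal.ofReal (r ^ (s - υ)) *
              (∫⁻ y in ball x (ρ/2) ∩ Y, ENNReal.ofReal (dist x y ^ (-s)) ∂ν) +
            ENNReal.ofReal (r ^ (s - υ)) *
              (ENNReal.ofReal ((ρ/2) ^ (-s) + r ^ (-s)) * ν Y) := mul_add _ _ _
        _ ≤ Cs + CL := by
            gcongr
            · -- first piece
              refine le_trans ?_ (claim x hx (ρ/2) hρ2 hρ2lt)
              exact mul_le_mul_left (ENNReal.ofReal_le_ofReal
                (Real.rpow_le_rpow_of_nonpos hρ2 hρ2r (by linarith))) _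
            · -- second piece
              rw [hCL, ← mul_assoc,
                ← ENNReal.ofReal_mul (Real.rpow_nonneg hr.le _)]
              refine mul_le_mul_left (ENNReal.ofReal_le_ofReal ?_) _
              have h1 : r ^ (s - υ) * (ρ/2) ^ (-s) ≤ (ρ/2) ^ (-υ) := by
                have ha : r ^ (s - υ) ≤ (ρ/2) ^ (s - υ) :=
                  Real.rpow_le_rpow_of_nonpos hρ2 hρ2r (by linarith)
                have hb : (ρ/2) ^ (s - υ) * (ρ/2) ^ (-s) = (ρ/2) ^ (-υ) := by
                  rw [← Real.rpow_add hρ2]; ring_nf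
                nlinarith [Real.rpow_nonneg hρ2.le (-s)]
              have h2 : r ^ (s - υ) * r ^ (-s) ≤ (ρ/2) ^ (-υ) := by
                have ha : r ^ (s - υ) * r ^ (-s) = r ^ (-υ) := by
                  rw [← Real.rpow_add hr]; ring_nf
                rw [ha]
                exact Real.rpow_le_rpow_of_nonpos hρ2 hρ2r (by linarith)
              nlinarith [Real.rpow_nonneg hr.le (s - υ)]
end
end

section
/- Let (M,d) be a metric space, X, Y ⊆ M, υ_Y ∈ (0,∞). Let ν be a measure on a σ-algebra of subsets of Y containing the Borel subsets of Y, with ν(B(x,r) ∩ Y) < ∞ for all x ∈ X and r > 0, and ν(Y) < ∞. Let Y be upper υ_Y-Ahlfors regular with respect to X. Then for every s ∈ (υ_Y, ∞): sup over (x,t) ∈ X × (0,∞) of t^{s−υ_Y} ∫_{Y\B(x,t)} d(x,y)^{−s} dν(y) is finite. -/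
open MeasureTheory Metric Set
open scoped ENNReal

noncomputable section

variable {M : Type*} [MetricSpace M] [MeasurableSpace M] [BorelSpace M]

theorem stmt_13 {M : Type*} [MetricSpace M] [MeasurableSpace M] [BorelSpace M]
    (X Y : Set M) (ν : Measure M) (hYm : MeasurableSet Y)
    (υ : ℝ) (hυ : 0 < υ)
    (hball : ∀ x ∈ X, ∀ r : ℝ, 0 < r → ν (ball x r ∩ Y) < ⊤)
    (hYfin : ν Y < ⊤)
    (hreg : UpperAhlforsRegular ν X Y υ) :
    ∀ s : ℝ, υ < s →
      sSup {t : ℝ≥0∞ | ∃ x ∈ X, ∃ r : ℝ, 0 < r ∧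
        t = ENNReal.ofReal (r ^ (s - υ)) *
          ∫⁻ y in Y \ ball x r, ENNReal.ofReal (dist x y ^ (-s)) ∂ν} < ⊤ := by
  obtain ⟨c, hc, r₀, hr₀, hAR⟩ := hreg
  intro s hs
  have hs0 : 0 < s := hυ.trans hs
  -- choose a positive real radius below r₀
  obtain ⟨ρ, hρ, hρr₀⟩ : ∃ ρ : ℝ, 0 < ρ ∧ ENNReal.ofReal ρ < r₀ := by
    rcases eq_or_ne r₀ ⊤ with h | h
    · exact ⟨1, one_pos, by simp [h]⟩
    · have h0 : 0 < r₀.toReal := ENNReal.toReal_pos hr₀.ne' h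
      refine ⟨r₀.toReal / 2, by positivity, ?_⟩
      calc ENNReal.ofReal (r₀.toReal / 2) < ENNReal.ofReal r₀.toReal := by
            rw [ENNReal.ofReal_lt_ofReal_iff h0]; linarith
        _ = r₀ := ENNReal.ofReal_toReal h
  set c' : ℝ := c + (ν Y).toReal / ρ ^ υ with hc'def
  have hρυ : (0:ℝ) < ρ ^ υ := Real.rpow_pos_of_pos hρ υ
  have hc'0 : 0 < c' := by
    have : (0:ℝ) ≤ (ν Y).toReal / ρ ^ υ := by positivity
    dsimp [c']; linarith
  -- unified Ahlfors bound for all radii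
  have hAR' : ∀ x ∈ X, ∀ R : ℝ, 0 < R → ν (ball x R ∩ Y) ≤ ENNReal.ofReal (c' * R ^ υ) := by
    intro x hx R hR
    rcases le_or_gt R ρ with hRρ | hRρ
    · refine le_trans (hAR x hx R hR (lt_of_le_of_lt (ENNReal.ofReal_le_ofReal hRρ) hρr₀)) ?_
      apply ENNReal.ofReal_le_ofReal
      have hRυ : (0:ℝ) ≤ R ^ υ := Real.rpow_nonneg hR.le υ
      have hcc' : c ≤ c' := by
        have : (0:ℝ) ≤ (ν Y).toReal / ρ ^ υ := by positivity
        dsimp [c']; linarith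
      exact mul_le_mul_of_nonneg_right hcc' hRυ
    · calc ν (ball x R ∩ Y) ≤ ν Y := measure_mono inter_subset_right
        _ = ENNReal.ofReal (ν Y).toReal := (ENNReal.ofReal_toReal hYfin.ne).symm
        _ ≤ ENNReal.ofReal (c' * R ^ υ) := by
            apply ENNReal.ofReal_le_ofReal
            have h1 : ρ ^ υ ≤ R ^ υ := Real.rpow_le_rpow hρ.le hRρ.le hυ.le
            have h2 : (0:ℝ) ≤ (ν Y).toReal := ENNReal.toReal_nonneg
            have h3 : (ν Y).toReal / ρ ^ υ * ρ ^ υ = (ν Y).toReal := by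
              field_simp
            have h4 : (0:ℝ) ≤ c * R ^ υ := by positivity
            have h5 : (ν Y).toReal / ρ ^ υ * ρ ^ υ ≤ (ν Y).toReal / ρ ^ υ * R ^ υ := by
              apply mul_le_mul_of_nonneg_left h1 (by positivity)
            calc (ν Y).toReal = (ν Y).toReal / ρ ^ υ * ρ ^ υ := h3.symm
              _ ≤ (ν Y).toReal / ρ ^ υ * R ^ υ := h5
              _ ≤ c' * R ^ υ := by dsimp [c']; nlinarith
  set q : ℝ := (2:ℝ) ^ (υ - s) with hqdef
  have hq0 : 0 < q := Real.rpow_pos_of_pos two_pos _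
  have hq1 : q < 1 := Real.rpow_lt_one_of_one_lt_of_neg one_lt_two (by linarith)
  have hq1' : ENNReal.ofReal q < 1 := by
    rw [← ENNReal.ofReal_one]
    exact ENNReal.ofReal_lt_ofReal_iff one_pos |>.2 hq1
  set C : ℝ≥0∞ := ENNReal.ofReal (c' * 2 ^ υ) * (1 - ENNReal.ofReal q)⁻¹ with hCdef
  have hC : C < ⊤ := by
    apply ENNReal.mul_lt_top ENNReal.ofReal_lt_top
    rw [ENNReal.inv_lt_top]
    exact tsub_pos_of_lt hq1'
  refine lt_of_le_of_lt (sSup_le ?_) hC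
  rintro t ⟨x, hx, r, hr, rfl⟩
  -- annuli
  set A : ℕ → Set M := fun k =>
    (ball x ((2:ℝ) ^ ((k:ℝ) + 1) * r) \ ball x ((2:ℝ) ^ (k:ℝ) * r)) ∩ Y with hAdef
  have hAm : ∀ k, MeasurableSet (A k) := fun k =>
    ((measurableSet_ball.diff measurableSet_ball).inter hYm)
  have hcover : Y \ ball x r ⊆ ⋃ k, A k := by
    rintro y ⟨hyY, hyB⟩
    have hd : r ≤ dist x y := by
      rw [mem_ball, not_lt, dist_comm] at hyB; exact hyB
    have hdy : 0 < dist x y := lt_of_lt_of_le hr hd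
    have h1 : (1:ℝ) ≤ dist x y / r := (one_le_div hr).2 hd
    obtain ⟨k, hk1, hk2⟩ := exists_nat_pow_near h1 one_lt_two
    refine mem_iUnion.2 ⟨k, ⟨⟨?_, ?_⟩, hyY⟩⟩
    · rw [mem_ball, dist_comm]
      have e : (2:ℝ) ^ ((k:ℝ) + 1) = (2:ℝ) ^ (k + 1 : ℕ) := by
        rw [show ((k:ℝ) + 1) = ((k + 1 : ℕ) : ℝ) by push_cast; ring, Real.rpow_natCast]
      rw [e]
      calc dist x y = dist x y / r * r := by field_simp
        _ < (2:ℝ) ^ (k+1:ℕ) * r := by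
            apply mul_lt_mul_of_pos_right hk2 hr
    · rw [mem_ball, not_lt, dist_comm]
      have e : (2:ℝ) ^ ((k:ℝ)) = (2:ℝ) ^ (k : ℕ) := Real.rpow_natCast 2 k
      rw [e]
      calc (2:ℝ) ^ (k:ℕ) * r ≤ dist x y / r * r := by
            apply mul_le_mul_of_nonneg_right hk1 hr.le
        _ = dist x y := by field_simp
  -- the key per-annulus real identity
  have key : ∀ k : ℕ,
      ((2:ℝ) ^ (k:ℝ) * r) ^ (-s) * (c' * ((2:ℝ) ^ ((k:ℝ) + 1) * r) ^ υ)
        = (c' * 2 ^ υ * r ^ (υ - s)) * q ^ k := by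
    intro k
    have h2 : (0:ℝ) ≤ 2 := by norm_num
    have e1 : ((2:ℝ) ^ ((k:ℝ))) ^ (-s) = (2:ℝ) ^ ((k:ℝ) * (-s)) :=
      (Real.rpow_mul h2 _ _).symm
    have e2 : ((2:ℝ) ^ ((k:ℝ) + 1)) ^ υ = (2:ℝ) ^ (((k:ℝ) + 1) * υ) :=
      (Real.rpow_mul h2 _ _).symm
    have h2comb : (2:ℝ) ^ ((k:ℝ) * (-s)) * (2:ℝ) ^ (((k:ℝ) + 1) * υ)
        = (2:ℝ) ^ υ * q ^ k := by
      rw [← Real.rpow_natCast q k, hqdef, ← Real.rpow_mul h2,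
        ← Real.rpow_add two_pos, ← Real.rpow_add two_pos]
      congr 1
      ring
    have hrcomb : r ^ (-s) * r ^ υ = r ^ (υ - s) := by
      rw [← Real.rpow_add hr]
      congr 1
      ring
    have hb1 : (0:ℝ) ≤ (2:ℝ) ^ (k:ℝ) := (Real.rpow_pos_of_pos two_pos _).le
    have hb2 : (0:ℝ) ≤ (2:ℝ) ^ ((k:ℝ) + 1) := (Real.rpow_pos_of_pos two_pos _).le
    rw [Real.mul_rpow hb1 hr.le, Real.mul_rpow hb2 hr.le, e1, e2]
    calc (2:ℝ) ^ ((k:ℝ) * (-s)) * r ^ (-s) * (c' * ((2:ℝ) ^ (((k:ℝ) + 1) * υ) * r ^ υ))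
        = c' * ((2:ℝ) ^ ((k:ℝ) * (-s)) * (2:ℝ) ^ (((k:ℝ) + 1) * υ)) * (r ^ (-s) * r ^ υ) := by
          ring
      _ = (c' * 2 ^ υ * r ^ (υ - s)) * q ^ k := by rw [h2comb, hrcomb]; ring
  -- per-annulus integral bound
  have hterm : ∀ k : ℕ,
      ∫⁻ y in A k, ENNReal.ofReal (dist x y ^ (-s)) ∂ν
        ≤ ENNReal.ofReal ((c' * 2 ^ υ * r ^ (υ - s)) * q ^ k) := by
    intro k
    have hRk : (0:ℝ) < (2:ℝ) ^ (k:ℝ) * r := by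
      have := Real.rpow_pos_of_pos (two_pos : (0:ℝ) < 2) (k:ℝ)
      positivity
    have hRk1 : (0:ℝ) < (2:ℝ) ^ ((k:ℝ) + 1) * r := by
      have := Real.rpow_pos_of_pos (two_pos : (0:ℝ) < 2) ((k:ℝ) + 1)
      positivity
    calc ∫⁻ y in A k, ENNReal.ofReal (dist x y ^ (-s)) ∂ν
        ≤ ∫⁻ _ in A k, ENNReal.ofReal (((2:ℝ) ^ (k:ℝ) * r) ^ (-s)) ∂ν := by
          apply setLIntegral_mono' (hAm k)
          intro y hy
          apply ENNReal.ofReal_le_ofReal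
          have hge : (2:ℝ) ^ (k:ℝ) * r ≤ dist x y := by
            have := hy.1.2
            rw [mem_ball, not_lt, dist_comm] at this
            exact this
          exact Real.rpow_le_rpow_of_nonpos hRk hge (by linarith)
      _ = ENNReal.ofReal (((2:ℝ) ^ (k:ℝ) * r) ^ (-s)) * ν (A k) := setLIntegral_const _ _
      _ ≤ ENNReal.ofReal (((2:ℝ) ^ (k:ℝ) * r) ^ (-s)) *
            ENNReal.ofReal (c' * ((2:ℝ) ^ ((k:ℝ) + 1) * r) ^ υ) := by
          apply mul_le_mul_right
          refine le_trans (measure_mono ?_) (hAR' x hx _ hRk1)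
          exact inter_subset_inter_left Y diff_subset
      _ = ENNReal.ofReal ((c' * 2 ^ υ * r ^ (υ - s)) * q ^ k) := by
          rw [← ENNReal.ofReal_mul (Real.rpow_nonneg hRk.le _), key k]
  -- sum up
  have hsum : ∫⁻ y in Y \ ball x r, ENNReal.ofReal (dist x y ^ (-s)) ∂ν
      ≤ ENNReal.ofReal (c' * 2 ^ υ * r ^ (υ - s)) * (1 - ENNReal.ofReal q)⁻¹ := by
    calc ∫⁻ y in Y \ ball x r, ENNReal.ofReal (dist x y ^ (-s)) ∂ν
        ≤ ∫⁻ y in ⋃ k, A k, ENNReal.ofReal (dist x y ^ (-s)) ∂ν :=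
          lintegral_mono_set hcover
      _ ≤ ∑' k, ∫⁻ y in A k, ENNReal.ofReal (dist x y ^ (-s)) ∂ν :=
          lintegral_iUnion_le _ _
      _ ≤ ∑' k, ENNReal.ofReal ((c' * 2 ^ υ * r ^ (υ - s)) * q ^ k) :=
          ENNReal.tsum_le_tsum hterm
      _ = ∑' k, ENNReal.ofReal (c' * 2 ^ υ * r ^ (υ - s)) * (ENNReal.ofReal q) ^ k := by
          congr 1; funext k
          rw [ENNReal.ofReal_mul (by positivity), ENNReal.ofReal_pow hq0.le]
      _ = ENNReal.ofReal (c' * 2 ^ υ * r ^ (υ - s)) * ∑' k, (ENNReal.ofReal q) ^ k :=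
          ENNReal.tsum_mul_left
      _ = ENNReal.ofReal (c' * 2 ^ υ * r ^ (υ - s)) * (1 - ENNReal.ofReal q)⁻¹ := by
          rw [ENNReal.tsum_geometric]
  calc ENNReal.ofReal (r ^ (s - υ)) *
        ∫⁻ y in Y \ ball x r, ENNReal.ofReal (dist x y ^ (-s)) ∂ν
      ≤ ENNReal.ofReal (r ^ (s - υ)) *
          (ENNReal.ofReal (c' * 2 ^ υ * r ^ (υ - s)) * (1 - ENNReal.ofReal q)⁻¹) :=
        mul_le_mul_right hsum _
    _ = ENNReal.ofReal (r ^ (s - υ) * (c' * 2 ^ υ * r ^ (υ - s))) *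
          (1 - ENNReal.ofReal q)⁻¹ := by
        rw [← mul_assoc, ← ENNReal.ofReal_mul (Real.rpow_nonneg hr.le _)]
    _ = C := by
        rw [hCdef]
        congr 2
        have : r ^ (s - υ) * r ^ (υ - s) = 1 := by
          rw [← Real.rpow_add hr]
          norm_num
        calc r ^ (s - υ) * (c' * 2 ^ υ * r ^ (υ - s))
            = (c' * 2 ^ υ) * (r ^ (s - υ) * r ^ (υ - s)) := by ring
          _ = c' * 2 ^ υ := by rw [this, mul_one]
end
end

section
/- Let (M,d) be a metric space, X, Y ⊆ M, υ_Y ∈ (0,∞). Let ν be a measure on a σ-algebra of subsets of Y containing the Borel subsets of Y, with ν(B(x,r) ∩ Y) < ∞ for all x ∈ X and r > 0, and ν(Y) < ∞. Let Y be strongly upper υ_Y-Ahlfors regular with respect to X. Then sup over (x,t) ∈ X × (0, 1/e) of |log t|^{−1} ∫_{Y\B(x,t)} d(x,y)^{−υ_Y} dν(y) is finite. -/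
open MeasureTheory Metric Set
open scoped ENNReal

noncomputable section

variable {M : Type*} [MetricSpace M] [MeasurableSpace M] [BorelSpace M]

private lemma rpow_neg_anti {a b υ : ℝ} (ha : 0 < a) (hab : a ≤ b) (hυ : 0 < υ) :
    b ^ (-υ) ≤ a ^ (-υ) := by
  rw [Real.rpow_neg ha.le, Real.rpow_neg (ha.trans_le hab).le]
  exact inv_anti₀ (Real.rpow_pos_of_pos ha υ) (Real.rpow_le_rpow ha.le hab hυ.le)

private lemma annulus_lintegral {M : Type*} [MetricSpace M] [MeasurableSpace M]
    (ν : Measure M) (Y : Set M) (x : M) {υ c : ℝ} (hυ : 0 < υ) (hc : 0 < c)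
    {s : ℝ} (hs : 0 < s)
    (hm : ν ((ball x (2 * s) \ ball x s) ∩ Y) ≤ ENNReal.ofReal (c * ((2 * s) ^ υ - s ^ υ))) :
    ∫⁻ y in (ball x (2 * s) \ ball x s) ∩ Y, ENNReal.ofReal (dist x y ^ (-υ)) ∂ν
      ≤ ENNReal.ofReal (c * 2 ^ υ) := by
  have hsu : (0:ℝ) < s ^ υ := Real.rpow_pos_of_pos hs υ
  have h2u : (0:ℝ) < (2:ℝ) ^ υ := Real.rpow_pos_of_pos two_pos υ
  have hb : ∀ y ∈ (ball x (2 * s) \ ball x s) ∩ Y,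
      ENNReal.ofReal (dist x y ^ (-υ)) ≤ ENNReal.ofReal (s ^ (-υ)) := by
    intro y hy
    have hd : s ≤ dist x y := by
      have := hy.1.2
      rw [mem_ball, dist_comm] at this
      linarith [not_lt.1 this]
    exact ENNReal.ofReal_le_ofReal (rpow_neg_anti hs hd hυ)
  calc ∫⁻ y in (ball x (2 * s) \ ball x s) ∩ Y, ENNReal.ofReal (dist x y ^ (-υ)) ∂ν
      ≤ ∫⁻ _ in (ball x (2 * s) \ ball x s) ∩ Y, ENNReal.ofReal (s ^ (-υ)) ∂ν :=
        setLIntegral_mono measurable_const hb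
    _ = ENNReal.ofReal (s ^ (-υ)) * ν ((ball x (2 * s) \ ball x s) ∩ Y) :=
        setLIntegral_const _ _
    _ ≤ ENNReal.ofReal (s ^ (-υ)) * ENNReal.ofReal (c * ((2 * s) ^ υ - s ^ υ)) :=
        mul_le_mul_right hm _
    _ = ENNReal.ofReal (s ^ (-υ) * (c * ((2 * s) ^ υ - s ^ υ))) :=
        (ENNReal.ofReal_mul (Real.rpow_nonneg hs.le _)).symm
    _ ≤ ENNReal.ofReal (c * 2 ^ υ) := by
        apply ENNReal.ofReal_le_ofReal
        have hmul : (2 * s) ^ υ = 2 ^ υ * s ^ υ := Real.mul_rpow (by norm_num) hs.le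
        rw [hmul, Real.rpow_neg hs.le]
        have : (s ^ υ)⁻¹ * (c * (2 ^ υ * s ^ υ - s ^ υ)) = c * (2 ^ υ - 1) := by
          field_simp
        rw [this]
        nlinarith

private lemma dyadic_lintegral {M : Type*} [MetricSpace M] [MeasurableSpace M]
    (ν : Measure M) (Y : Set M) (x : M) {υ c : ℝ} (hυ : 0 < υ) (hc : 0 < c)
    {r₀ : ℝ≥0∞}
    (hr : ∀ r₁ r₂ : ℝ, 0 ≤ r₁ → r₁ < r₂ → ENNReal.ofReal r₂ < r₀ →
      ν ((ball x r₂ \ ball x r₁) ∩ Y) ≤ ENNReal.ofReal (c * (r₂ ^ υ - r₁ ^ υ)))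
    {r : ℝ} (hrpos : 0 < r) :
    ∀ N : ℕ, ENNReal.ofReal (2 ^ N * r) < r₀ →
      ∫⁻ y in (ball x (2 ^ N * r) \ ball x r) ∩ Y, ENNReal.ofReal (dist x y ^ (-υ)) ∂ν
        ≤ N * ENNReal.ofReal (c * 2 ^ υ) := by
  intro N
  induction N with
  | zero => intro _; simp
  | succ N ih =>
    intro hN
    have hpN : (0:ℝ) < 2 ^ N * r := by positivity
    have hle : (2:ℝ) ^ N * r ≤ 2 ^ (N + 1) * r := by
      have : (2:ℝ) ^ N ≤ 2 ^ (N + 1) := by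
        apply pow_le_pow_right₀ (by norm_num) (Nat.le_succ N)
      nlinarith
    have h1 : ENNReal.ofReal (2 ^ N * r) < r₀ :=
      lt_of_le_of_lt (ENNReal.ofReal_le_ofReal hle) hN
    have hsub : (ball x (2 ^ (N + 1) * r) \ ball x r) ∩ Y ⊆
        ((ball x (2 * (2 ^ N * r)) \ ball x (2 ^ N * r)) ∩ Y) ∪
          ((ball x (2 ^ N * r) \ ball x r) ∩ Y) := by
      intro y hy
      by_cases h : y ∈ ball x (2 ^ N * r)
      · exact Or.inr ⟨⟨h, hy.1.2⟩, hy.2⟩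
      · refine Or.inl ⟨⟨?_, h⟩, hy.2⟩
        have : (2:ℝ) ^ (N + 1) * r = 2 * (2 ^ N * r) := by ring
        rw [← this]; exact hy.1.1
    have he2 : ENNReal.ofReal (2 * (2 ^ N * r)) < r₀ := by
      have : (2:ℝ) * (2 ^ N * r) = 2 ^ (N + 1) * r := by ring
      rw [this]; exact hN
    have hann := annulus_lintegral ν Y x hυ hc hpN
      (hr (2 ^ N * r) (2 * (2 ^ N * r)) hpN.le (by nlinarith) he2)
    calc ∫⁻ y in (ball x (2 ^ (N + 1) * r) \ ball x r) ∩ Y,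
          ENNReal.ofReal (dist x y ^ (-υ)) ∂ν
        ≤ ∫⁻ y in ((ball x (2 * (2 ^ N * r)) \ ball x (2 ^ N * r)) ∩ Y) ∪
            ((ball x (2 ^ N * r) \ ball x r) ∩ Y),
            ENNReal.ofReal (dist x y ^ (-υ)) ∂ν := lintegral_mono_set hsub
      _ ≤ (∫⁻ y in (ball x (2 * (2 ^ N * r)) \ ball x (2 ^ N * r)) ∩ Y,
            ENNReal.ofReal (dist x y ^ (-υ)) ∂ν) +
          ∫⁻ y in (ball x (2 ^ N * r) \ ball x r) ∩ Y,
            ENNReal.ofReal (dist x y ^ (-υ)) ∂ν := lintegral_union_le _ _ _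
      _ ≤ ENNReal.ofReal (c * 2 ^ υ) + N * ENNReal.ofReal (c * 2 ^ υ) :=
            add_le_add hann (ih h1)
      _ = (N + 1 : ℕ) * ENNReal.ofReal (c * 2 ^ υ) := by
            push_cast
            ring

theorem stmt_14 {M : Type*} [MetricSpace M] [MeasurableSpace M] [BorelSpace M]
    (X Y : Set M) (ν : Measure M) (hYm : MeasurableSet Y)
    (υ : ℝ) (hυ : 0 < υ)
    (hball : ∀ x ∈ X, ∀ r : ℝ, 0 < r → ν (ball x r ∩ Y) < ⊤)
    (hYfin : ν Y < ⊤)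
    (hreg : StronglyUpperAhlforsRegular ν X Y υ) :
    sSup {t : ℝ≥0∞ | ∃ x ∈ X, ∃ r : ℝ, 0 < r ∧ r < Real.exp (-1) ∧
      t = ENNReal.ofReal |Real.log r|⁻¹ *
        ∫⁻ y in Y \ ball x r, ENNReal.ofReal (dist x y ^ (-υ)) ∂ν} < ⊤ := by
  obtain ⟨c, hc, r₀, hr₀pos, hreg'⟩ := hreg
  have h2u : (0:ℝ) < (2:ℝ) ^ υ := Real.rpow_pos_of_pos two_pos υ
  have hlog2 : (0:ℝ) < Real.log 2 := Real.log_pos one_lt_two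
  set R : ℝ := if r₀ = ⊤ then 1 else min 1 (r₀.toReal / 4) with hRdef
  have hRpos : 0 < R := by
    rw [hRdef]; split_ifs with h
    · norm_num
    · exact lt_min one_pos (div_pos (ENNReal.toReal_pos hr₀pos.ne' h) (by norm_num))
  have hRle1 : R ≤ 1 := by
    rw [hRdef]; split_ifs with h
    · exact le_refl 1
    · exact min_le_left _ _
  have h2R : ENNReal.ofReal (2 * R) < r₀ := by
    by_cases h : r₀ = ⊤
    · rw [h]; exact ENNReal.ofReal_lt_top
    · have ht : 0 < r₀.toReal := ENNReal.toReal_pos hr₀pos.ne' h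
      have hRle : R ≤ r₀.toReal / 4 := by rw [hRdef, if_neg h]; exact min_le_right _ _
      calc ENNReal.ofReal (2 * R) ≤ ENNReal.ofReal (r₀.toReal / 2) :=
            ENNReal.ofReal_le_ofReal (by linarith)
        _ < ENNReal.ofReal r₀.toReal := by
            rw [ENNReal.ofReal_lt_ofReal_iff ht]; linarith
        _ = r₀ := ENNReal.ofReal_toReal h
  set B : ℝ≥0∞ := ENNReal.ofReal ((1 / Real.log 2 + 1) * (c * 2 ^ υ)) +
    ENNReal.ofReal (R ^ (-υ)) * ν Y with hBdef
  have hBfin : B < ⊤ :=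
    ENNReal.add_lt_top.2 ⟨ENNReal.ofReal_lt_top,
      ENNReal.mul_lt_top ENNReal.ofReal_lt_top hYfin⟩
  refine lt_of_le_of_lt (sSup_le ?_) hBfin
  rintro t ⟨x, hx, r, hrpos, hre, rfl⟩
  -- basic facts about the logarithm
  have hlogr : Real.log r < -1 := by
    have := Real.log_lt_log hrpos hre
    rwa [Real.log_exp] at this
  have habs : |Real.log r| = -Real.log r := abs_of_neg (by linarith)
  set L : ℝ := -Real.log r with hLdef
  have hL1 : 1 ≤ L := by rw [hLdef]; linarith
  have hLpos : 0 < L := by linarith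
  -- choice of N
  have hex : ∃ n : ℕ, R ≤ 2 ^ n * r := by
    obtain ⟨n, hn⟩ := pow_unbounded_of_one_lt (R / r) one_lt_two
    refine ⟨n, ?_⟩
    rw [div_lt_iff₀ hrpos] at hn
    linarith
  set N : ℕ := Nat.find hex with hNdef
  have hNspec : R ≤ 2 ^ N * r := Nat.find_spec hex
  -- far part
  have hIfar : ∫⁻ y in Y \ ball x R, ENNReal.ofReal (dist x y ^ (-υ)) ∂ν
      ≤ ENNReal.ofReal (R ^ (-υ)) * ν Y := by
    have hb : ∀ y ∈ Y \ ball x R,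
        ENNReal.ofReal (dist x y ^ (-υ)) ≤ ENNReal.ofReal (R ^ (-υ)) := by
      intro y hy
      have hd : R ≤ dist x y := by
        have := hy.2
        rw [mem_ball, dist_comm] at this
        linarith [not_lt.1 this]
      exact ENNReal.ofReal_le_ofReal (rpow_neg_anti hRpos hd hυ)
    calc ∫⁻ y in Y \ ball x R, ENNReal.ofReal (dist x y ^ (-υ)) ∂ν
        ≤ ∫⁻ _ in Y \ ball x R, ENNReal.ofReal (R ^ (-υ)) ∂ν :=
          setLIntegral_mono measurable_const hb
      _ = ENNReal.ofReal (R ^ (-υ)) * ν (Y \ ball x R) := setLIntegral_const _ _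
      _ ≤ ENNReal.ofReal (R ^ (-υ)) * ν Y :=
          mul_le_mul_right (measure_mono diff_subset) _
  -- near part
  have hInear : ∫⁻ y in (ball x (2 ^ N * r) \ ball x r) ∩ Y,
      ENNReal.ofReal (dist x y ^ (-υ)) ∂ν ≤ N * ENNReal.ofReal (c * 2 ^ υ) := by
    rcases Nat.eq_zero_or_pos N with h0 | hNpos
    · rw [h0]
      simp
    · have hmin : ¬ R ≤ 2 ^ (N - 1) * r := Nat.find_min hex (Nat.sub_lt hNpos one_pos)
      have h2N : (2:ℝ) ^ N * r < 2 * R := by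
        have he : (2:ℝ) ^ N = 2 * 2 ^ (N - 1) := by
          rw [← pow_succ']
          congr 1
          omega
        rw [he]
        nlinarith [not_le.1 hmin]
      have hlt : ENNReal.ofReal (2 ^ N * r) < r₀ :=
        lt_of_le_of_lt (ENNReal.ofReal_le_ofReal h2N.le) h2R
      exact dyadic_lintegral ν Y x hυ hc (hreg' x hx) hrpos N hlt
  -- split of the domain
  have hsplit : Y \ ball x r ⊆
      ((ball x (2 ^ N * r) \ ball x r) ∩ Y) ∪ (Y \ ball x R) := by
    intro y hy
    by_cases h : y ∈ ball x (2 ^ N * r)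
    · exact Or.inl ⟨⟨h, hy.2⟩, hy.1⟩
    · refine Or.inr ⟨hy.1, fun hcon => h ?_⟩
      rw [mem_ball] at hcon ⊢
      linarith
  have hI : ∫⁻ y in Y \ ball x r, ENNReal.ofReal (dist x y ^ (-υ)) ∂ν
      ≤ N * ENNReal.ofReal (c * 2 ^ υ) + ENNReal.ofReal (R ^ (-υ)) * ν Y :=
    (lintegral_mono_set hsplit).trans
      ((lintegral_union_le _ _ _).trans (add_le_add hInear hIfar))
  -- bound on N
  have hNle : (N : ℝ) ≤ L * (1 / Real.log 2 + 1) := by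
    rcases Nat.eq_zero_or_pos N with h0 | hNpos
    · rw [h0]
      push_cast
      have hK : (0:ℝ) < 1 / Real.log 2 + 1 := by positivity
      nlinarith
    · have hmin : ¬ R ≤ 2 ^ (N - 1) * r := Nat.find_min hex (Nat.sub_lt hNpos one_pos)
      have h1 : (2:ℝ) ^ (N - 1) * r < R := not_le.1 hmin
      have h2 : Real.log (2 ^ (N - 1) * r) < Real.log R :=
        Real.log_lt_log (by positivity) h1
      have h3 : Real.log R ≤ 0 := Real.log_nonpos hRpos.le hRle1
      have h4 : Real.log ((2:ℝ) ^ (N - 1) * r) = (N - 1 : ℕ) * Real.log 2 + Real.log r := by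
        rw [Real.log_mul (by positivity) hrpos.ne', Real.log_pow]
      have hcast : ((N - 1 : ℕ) : ℝ) = (N : ℝ) - 1 := by
        rw [Nat.cast_sub hNpos]
        norm_num
      have h5 : ((N : ℝ) - 1) * Real.log 2 < L := by
        rw [h4, hcast] at h2
        rw [hLdef]; linarith
      have h6 : (N : ℝ) - 1 < L / Real.log 2 := by
        rw [lt_div_iff₀ hlog2]; linarith
      have h7 : L / Real.log 2 = L * (1 / Real.log 2) := by ring
      nlinarith
  -- combine
  rw [habs]
  calc ENNReal.ofReal L⁻¹ * ∫⁻ y in Y \ ball x r, ENNReal.ofReal (dist x y ^ (-υ)) ∂ν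
      ≤ ENNReal.ofReal L⁻¹ *
          (N * ENNReal.ofReal (c * 2 ^ υ) + ENNReal.ofReal (R ^ (-υ)) * ν Y) :=
        mul_le_mul_right hI _
    _ = ENNReal.ofReal L⁻¹ * (N * ENNReal.ofReal (c * 2 ^ υ)) +
          ENNReal.ofReal L⁻¹ * (ENNReal.ofReal (R ^ (-υ)) * ν Y) := mul_add _ _ _
    _ ≤ ENNReal.ofReal ((1 / Real.log 2 + 1) * (c * 2 ^ υ)) +
          ENNReal.ofReal (R ^ (-υ)) * ν Y := by
        gcongr ?_ + ?_
        · rw [← ENNReal.ofReal_natCast N, ← ENNReal.ofReal_mul (Nat.cast_nonneg N),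
            ← ENNReal.ofReal_mul (by positivity)]
          apply ENNReal.ofReal_le_ofReal
          have key : L⁻¹ * (N : ℝ) ≤ 1 / Real.log 2 + 1 := by
            have h1 : L⁻¹ * (N : ℝ) ≤ L⁻¹ * (L * (1 / Real.log 2 + 1)) := by
              apply mul_le_mul_of_nonneg_left hNle (by positivity)
            have h2 : L⁻¹ * (L * (1 / Real.log 2 + 1)) = 1 / Real.log 2 + 1 := by
              field_simp
            linarith
          calc L⁻¹ * ((N : ℝ) * (c * 2 ^ υ)) = (L⁻¹ * (N : ℝ)) * (c * 2 ^ υ) := by ring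
            _ ≤ (1 / Real.log 2 + 1) * (c * 2 ^ υ) := by
                apply mul_le_mul_of_nonneg_right key (by positivity)
        · calc ENNReal.ofReal L⁻¹ * (ENNReal.ofReal (R ^ (-υ)) * ν Y)
              ≤ 1 * (ENNReal.ofReal (R ^ (-υ)) * ν Y) := by
                apply mul_le_mul_left
                apply ENNReal.ofReal_le_one.2
                rw [inv_le_one_iff₀]
                right
                exact hL1
            _ = ENNReal.ofReal (R ^ (-υ)) * ν Y := one_mul _
end
end

section
/- Let n ∈ ℕ, n ≥ 1, and let Y ⊆ ℝⁿ be a compact topological (C⁰) manifold embedded in ℝⁿ of dimension m with m ≥ 1 (i.e., Y is a compact subset of ℝⁿ such that every point of Y has an open neighborhood in Y homeomorphic to an open subset of ℝᵐ). Then there exists a ∈ (0,∞) such that for each ρ ∈ (0,a) and each x' ∈ Y there exists x'' ∈ Y with |x' − x''| = ρ. -/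
open MeasureTheory Metric Set
open scoped ENNReal

noncomputable section

variable {M : Type*} [MetricSpace M] [MeasurableSpace M] [BorelSpace M]

theorem stmt_15 (n m : ℕ) (hn : 1 ≤ n) (hm : 1 ≤ m)
    (Y : Set (EuclideanSpace ℝ (Fin n))) (hY : IsCompact Y)
    (hchart : ∀ y ∈ Y, ∃ U : Set (EuclideanSpace ℝ (Fin n)), IsOpen U ∧ y ∈ U ∧
      ∃ V : Set (EuclideanSpace ℝ (Fin m)), IsOpen V ∧
        Nonempty (((Y ∩ U : Set (EuclideanSpace ℝ (Fin n)))) ≃ₜ (V : Set (EuclideanSpace ℝ (Fin m))))) :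
    ∃ a : ℝ, 0 < a ∧ ∀ ρ : ℝ, 0 < ρ → ρ < a →
      ∀ x' ∈ Y, ∃ x'' ∈ Y, dist x' x'' = ρ := by
  classical
  have local_claim : ∀ y ∈ Y, ∃ d : ℝ, 0 < d ∧ ∃ O : Set (EuclideanSpace ℝ (Fin n)),
      IsOpen O ∧ y ∈ O ∧ ∀ x ∈ Y ∩ O, ∀ ρ : ℝ, 0 < ρ → ρ < d →
        ∃ x'' ∈ Y, dist x x'' = ρ := by
    intro y hy
    obtain ⟨U, hUopen, hyU, V, hVopen, ⟨e⟩⟩ := hchart y hy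
    set yo : ↥(Y ∩ U) := ⟨y, hy, hyU⟩ with hyo
    set v₀ : EuclideanSpace ℝ (Fin m) := (e yo : EuclideanSpace ℝ (Fin m)) with hv₀def
    have hv₀ : v₀ ∈ V := (e yo).2
    obtain ⟨ε', hε', hballV⟩ := Metric.isOpen_iff.mp hVopen v₀ hv₀
    set ε := ε' / 2 with hεdef
    have hεpos : 0 < ε := by positivity
    -- a second point at distance ε/2 from v₀
    set w : EuclideanSpace ℝ (Fin m) := v₀ + EuclideanSpace.single (⟨0, hm⟩ : Fin m) (ε / 2)
      with hwdef
    have hw : dist w v₀ = ε / 2 := by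
      rw [hwdef, dist_self_add_left, EuclideanSpace.norm_single, Real.norm_eq_abs,
        abs_of_pos (by positivity : (0:ℝ) < ε / 2)]
    have hwV : w ∈ V := hballV (by rw [Metric.mem_ball, hw]; linarith)
    set p : EuclideanSpace ℝ (Fin n) := ((e.symm ⟨v₀, hv₀⟩ : ↥(Y ∩ U)) : EuclideanSpace ℝ (Fin n))
      with hpdef
    set q : EuclideanSpace ℝ (Fin n) := ((e.symm ⟨w, hwV⟩ : ↥(Y ∩ U)) : EuclideanSpace ℝ (Fin n))
      with hqdef
    have hpq : p ≠ q := by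
      intro h
      have h1 : (e.symm ⟨v₀, hv₀⟩ : ↥(Y ∩ U)) = e.symm ⟨w, hwV⟩ := Subtype.ext h
      have h2 : (⟨v₀, hv₀⟩ : ↥V) = ⟨w, hwV⟩ := e.symm.injective h1
      have h3 : v₀ = w := congrArg Subtype.val h2
      rw [h3] at hw
      simp at hw
      linarith
    set d := dist p q with hddef
    have hd : 0 < d := dist_pos.mpr hpq
    refine ⟨d / 2, by positivity, ?_⟩
    -- extract an ambient open set O
    have hW' : IsOpen (e ⁻¹' (Subtype.val ⁻¹' Metric.ball v₀ (ε / 2)) : Set ↥(Y ∩ U)) :=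
      (Metric.isOpen_ball.preimage continuous_subtype_val).preimage e.continuous
    obtain ⟨O', hO'open, hO'⟩ := isOpen_induced_iff.mp hW'
    refine ⟨U ∩ O', hUopen.inter hO'open, ⟨hyU, ?_⟩, ?_⟩
    · have hymem : yo ∈ (e ⁻¹' (Subtype.val ⁻¹' Metric.ball v₀ (ε / 2)) : Set ↥(Y ∩ U)) := by
        simp only [Set.mem_preimage, Metric.mem_ball, ← hv₀def, dist_self]
        positivity
      rw [← hO'] at hymem
      exact hymem
    · intro x hx ρ hρ hρd
      obtain ⟨hxY, hxU, hxO'⟩ : x ∈ Y ∧ x ∈ U ∧ x ∈ O' := ⟨hx.1, hx.2.1, hx.2.2⟩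
      set xh : ↥(Y ∩ U) := ⟨x, hxY, hxU⟩ with hxh
      have hxW' : xh ∈ (e ⁻¹' (Subtype.val ⁻¹' Metric.ball v₀ (ε / 2)) : Set ↥(Y ∩ U)) := by
        rw [← hO']; exact hxO'
      have hc : dist ((e xh : ↥V) : EuclideanSpace ℝ (Fin m)) v₀ < ε / 2 := hxW'
      set c : EuclideanSpace ℝ (Fin m) := ((e xh : ↥V) : EuclideanSpace ℝ (Fin m)) with hcdef
      set B := Metric.closedBall c ε with hBdef
      have hBV : B ⊆ V := by
        intro z hz
        apply hballV
        rw [Metric.mem_ball]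
        calc dist z v₀ ≤ dist z c + dist c v₀ := dist_triangle _ _ _
          _ < ε + ε / 2 := by
              exact add_lt_add_of_le_of_lt (Metric.mem_closedBall.mp hz) hc
          _ < ε' := by rw [hεdef]; linarith
      set C := ((fun z : ↥V => ((e.symm z : ↥(Y ∩ U)) : EuclideanSpace ℝ (Fin n))) ''
        (Subtype.val ⁻¹' B : Set ↥V)) with hCdef
      have hpreB : IsPreconnected (Subtype.val ⁻¹' B : Set ↥V) := by
        have himg : Subtype.val '' (Subtype.val ⁻¹' B : Set ↥V) = B := by
          rw [Set.image_preimage_eq_inter_range, Subtype.range_coe,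
            Set.inter_eq_self_of_subset_left hBV]
        have hBconn : IsPreconnected B := (convex_closedBall c ε).isPreconnected
        rw [← himg] at hBconn
        exact (Topology.IsInducing.subtypeVal.isPreconnected_image).mp hBconn
      have hCconn : IsPreconnected C :=
        hpreB.image _ (continuous_subtype_val.comp e.symm.continuous).continuousOn
      have hCY : C ⊆ Y := by
        rintro z ⟨u, -, rfl⟩
        exact (e.symm u).2.1
      have hxC : x ∈ C := by
        refine ⟨e xh, ?_, ?_⟩
        · simp only [Set.mem_preimage, hBdef, Metric.mem_closedBall, ← hcdef, dist_self]
          positivity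
        · simp [hxh]
      have hpC : p ∈ C := by
        refine ⟨⟨v₀, hv₀⟩, ?_, rfl⟩
        simp only [Set.mem_preimage, hBdef, Metric.mem_closedBall]
        calc dist v₀ c = dist c v₀ := dist_comm _ _
          _ ≤ ε := le_of_lt (lt_of_lt_of_le hc (by linarith))
      have hqC : q ∈ C := by
        refine ⟨⟨w, hwV⟩, ?_, rfl⟩
        simp only [Set.mem_preimage, hBdef, Metric.mem_closedBall]
        calc dist w c ≤ dist w v₀ + dist v₀ c := dist_triangle _ _ _
          _ = ε / 2 + dist c v₀ := by rw [hw, dist_comm]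
          _ ≤ ε / 2 + ε / 2 := by linarith
          _ = ε := by ring
      have hfar : ∃ b ∈ C, ρ ≤ dist x b := by
        rcases le_or_gt ρ (dist x p) with h | h
        · exact ⟨p, hpC, h⟩
        · refine ⟨q, hqC, ?_⟩
          have htri : d ≤ dist p x + dist x q := dist_triangle _ _ _
          have : dist p x = dist x p := dist_comm _ _
          linarith
      obtain ⟨b, hbC, hb⟩ := hfar
      have hIVT := hCconn.intermediate_value hxC hbC
        ((continuous_const.dist continuous_id).continuousOn :
          ContinuousOn (fun z => dist x z) C)
      have hρIcc : ρ ∈ Set.Icc (dist x x) (dist x b) := by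
        rw [dist_self]
        exact ⟨le_of_lt hρ, hb⟩
      obtain ⟨x'', hx''C, hx''⟩ := hIVT hρIcc
      exact ⟨x'', hCY hx''C, hx''⟩
  -- globalize by compactness
  choose! d hd O hOopen hyO hprop using local_claim
  rcases Set.eq_empty_or_nonempty Y with hYe | hYne
  · exact ⟨1, one_pos, fun ρ _ _ x' hx' => absurd hx' (by simp [hYe])⟩
  have hcov : ∀ y ∈ Y, O y ∈ nhds y := fun y hy => (hOopen y hy).mem_nhds (hyO y hy)
  obtain ⟨t, htY, hcover⟩ := hY.elim_nhds_subcover O hcov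
  have htne : t.Nonempty := by
    by_contra h
    rw [Finset.not_nonempty_iff_eq_empty] at h
    obtain ⟨y, hy⟩ := hYne
    have := hcover hy
    simp [h] at this
  refine ⟨t.inf' htne d, ?_, ?_⟩
  · rw [Finset.lt_inf'_iff]
    exact fun y hyt => hd y (htY y hyt)
  · intro ρ hρ hρa x' hx'
    obtain ⟨y, hyt, hx'O⟩ := Set.mem_iUnion₂.mp (hcover hx')
    exact hprop y (htY y hyt) x' ⟨hx', hx'O⟩ ρ hρ (lt_of_lt_of_le hρa (Finset.inf'_le d hyt))
end
end
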